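/- arXiv:2309.09491 — 2 statements merged into one kernel-verified Lean document; each statement's English description precedes it below -/
import Mathlib

section
/- Let p be an odd prime. Then (2^(p-1) - 1)/p ≡ ∑_{r odd, 1 ≤ r < p} 1/r − p · ∑_{r=1}^{p-1} 2^(r-1)/r^2 (mod p^2). -/
/-!
Put `A = ∑_{k=1}^{p-1} C(p,k) (-2)^k / k`. Evaluating the identity
`∑_{k=1}^n C(n,k) x^k / k = ∑_{m=1}^n ((1+x)^m - 1) / m` at `n = p`, `x = -2` gives
`A = 2 (2^(p-1) - 1) / p - 2 ∑_{r odd} 1/r`. On the other hand `k C(p,k) = p C(p-1,k-1)` and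
`C(p-1,k-1) ≡ (-1)^(k-1) (mod p)`, so `C(p,k)/k ≡ p (-1)^(k-1) / k^2 (mod p^2)` and
`A ≡ -2p ∑ 2^(k-1)/k^2 (mod p^2)`. Comparing the two expressions for `A` and halving gives
the claim.
-/

/-- Rational congruence: `x ≡ y (mod m)` means that `x - y`, written in lowest
terms, has numerator divisible by `m`. -/
def ratModEq (m : ℕ) (x y : ℚ) : Prop := (m : ℤ) ∣ (x - y).num

open Finset

section BinomialSums

variable {K : Type*} [Field K]

lemma sum_Icc_choose_mul_pow (n : ℕ) (x : K) :
    ∑ k ∈ Icc 1 n, (n.choose k : K) * x ^ k = (1 + x) ^ n - 1 := by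
  rw [add_comm, add_pow, sum_range_eq_add_Ico _ (by omega : 0 < n + 1), Ico_add_one_right_eq_Icc]
  simp [mul_comm]

lemma sum_neg_one_pow_sub_one_div (s : Finset ℕ) :
    ∑ m ∈ s, ((-1 : K) ^ m - 1) / m = -2 * ∑ m ∈ s with Odd m, (1 : K) / m := by
  rw [mul_sum, sum_filter]
  refine sum_congr rfl fun m _ => ?_
  rcases m.even_or_odd with hm | hm
  · simp [hm.neg_one_pow, Nat.not_odd_iff_even.mpr hm]
  · rw [if_pos hm, hm.neg_one_pow]
    ring

variable [CharZero K]

lemma choose_succ_mul_pow_div (n : ℕ) (x : K) {k : ℕ} (hk : 1 ≤ k) :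
    ((n + 1).choose k : K) * x ^ k / k
      = (n.choose k : K) * x ^ k / k + ((n + 1).choose k : K) * x ^ k / (n + 1) := by
  obtain ⟨j, rfl⟩ := Nat.exists_eq_add_of_le' hk
  have hrec : ((n : K) + 1) * n.choose j = (n + 1).choose (j + 1) * (j + 1) := by
    exact_mod_cast Nat.add_one_mul_choose_eq n j
  have hpascal : ((n + 1).choose (j + 1) : K) = n.choose j + n.choose (j + 1) := by
    exact_mod_cast Nat.choose_succ_succ n j
  field_simp
  push_cast
  linear_combination x ^ (j + 1) * ((n : K) + 1) * hpascal + x ^ (j + 1) * hrec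

lemma sum_choose_mul_pow_div (n : ℕ) (x : K) :
    ∑ k ∈ Icc 1 n, (n.choose k : K) * x ^ k / k = ∑ m ∈ Icc 1 n, ((1 + x) ^ m - 1) / m := by
  induction n with
  | zero => simp
  | succ n ih =>
    rw [sum_congr rfl fun k hk => choose_succ_mul_pow_div n x (mem_Icc.mp hk).1,
      sum_add_distrib, ← sum_div, sum_Icc_choose_mul_pow, sum_Icc_succ_top (by omega),
      Nat.choose_succ_self, ih, sum_Icc_succ_top (by omega)]
    push_cast
    ring

lemma sum_Icc_choose_mul_neg_two_pow_div {p : ℕ} (hp : Odd p) :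
    ∑ k ∈ Icc 1 (p - 1), (p.choose k : K) * (-2) ^ k / k
      = 2 * ((2 ^ (p - 1) - 1) / p) - 2 * ∑ r ∈ Icc 1 (p - 1) with Odd r, (1 : K) / r := by
  obtain ⟨n, rfl⟩ : ∃ n, p = n + 1 := ⟨p - 1, (Nat.sub_add_cancel hp.pos).symm⟩
  have h := sum_choose_mul_pow_div (n + 1) (-2 : K)
  rw [sum_Icc_succ_top (by omega), sum_Icc_succ_top (by omega),
    show (1 : K) + -2 = -1 by norm_num, sum_neg_one_pow_sub_one_div, hp.neg_pow, hp.neg_one_pow,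
    Nat.choose_self] at h
  rw [Nat.add_sub_cancel]
  have hp0 : (n + 1 : K) ≠ 0 := by exact_mod_cast n.succ_ne_zero
  push_cast at h ⊢
  field_simp at h ⊢
  linear_combination h

end BinomialSums

section CoprimeDen

variable {m : ℕ}

lemma Rat.coprime_den_add {x y : ℚ} (hx : x.den.Coprime m) (hy : y.den.Coprime m) :
    (x + y).den.Coprime m :=
  (hx.mul_left hy).coprime_dvd_left (Rat.add_den_dvd x y)

lemma Rat.coprime_den_mul {x y : ℚ} (hx : x.den.Coprime m) (hy : y.den.Coprime m) :
    (x * y).den.Coprime m :=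
  (hx.mul_left hy).coprime_dvd_left (Rat.mul_den_dvd x y)

lemma Rat.coprime_den_sum {ι : Type*} (s : Finset ι) (f : ι → ℚ)
    (hf : ∀ i ∈ s, (f i).den.Coprime m) : (∑ i ∈ s, f i).den.Coprime m := by
  classical
  induction s using Finset.induction_on with
  | empty => simp
  | insert i s hi ih =>
    rw [sum_insert hi]
    exact Rat.coprime_den_add (hf i (mem_insert_self i s))
      (ih fun j hj => hf j (mem_insert_of_mem hj))

lemma Rat.coprime_den_intCast_div_natCast (a : ℤ) {b : ℕ} (hb : b.Coprime m) :
    ((a : ℚ) / b).den.Coprime m := by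
  rw [div_eq_mul_inv]
  refine Rat.coprime_den_mul (by simp) ?_
  rw [Rat.inv_natCast_den]
  split_ifs
  exacts [Nat.coprime_one_left m, hb]

lemma ratModEq_of_sub_eq_mul {x y z : ℚ} (hz : z.den.Coprime m) (h : x - y = m * z) :
    ratModEq m x y := by
  have hcross : (x - y).num * z.den = m * z.num * (x - y).den := by
    have : ((x - y).num : ℚ) * z.den = m * z.num * (x - y).den := by
      rw [← Rat.mul_den_eq_num, ← Rat.mul_den_eq_num z, h]; ring
    exact_mod_cast this
  have hdvd : (m : ℤ) ∣ (x - y).num * z.den := ⟨z.num * (x - y).den, by rw [hcross]; ring⟩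
  exact (Nat.isCoprime_iff_coprime.mpr hz.symm).dvd_of_dvd_mul_right hdvd

end CoprimeDen

lemma ZMod.natCast_choose_pred {p : ℕ} [Fact p.Prime] {j : ℕ} (hj : j < p) :
    ((p - 1).choose j : ZMod p) = (-1) ^ j := by
  induction j with
  | zero => simp
  | succ j ih =>
    have hj1 : ((j + 1 : ℕ) : ZMod p) ≠ 0 := by
      rw [Ne, ZMod.natCast_eq_zero_iff]
      exact Nat.not_dvd_of_pos_of_lt j.succ_pos hj
    have hsub : ((p - 1 - j : ℕ) : ZMod p) = -(j + 1 : ℕ) := by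
      rw [Nat.cast_sub (by omega), Nat.cast_sub (Fact.out : p.Prime).one_le, ZMod.natCast_self]
      push_cast; ring
    have hrec := congrArg (Nat.cast : ℕ → ZMod p) (Nat.choose_succ_right_eq (p - 1) j)
    push_cast [hsub, ih (by omega)] at hrec
    refine mul_right_cancel₀ hj1 ?_
    push_cast
    linear_combination hrec

lemma Nat.Prime.mul_choose_modEq {p k : ℕ} (hp : p.Prime) (hk0 : 0 < k) (hk : k < p) :
    (k * p.choose k : ℤ) ≡ p * (-1) ^ (k - 1) [ZMOD p ^ 2] := by
  have := Fact.mk hp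
  have hmod : ((p - 1).choose (k - 1) : ℤ) ≡ (-1) ^ (k - 1) [ZMOD p] := by
    rw [← ZMod.intCast_eq_intCast_iff]
    push_cast
    exact ZMod.natCast_choose_pred (by omega)
  have hrec := Nat.add_one_mul_choose_eq (p - 1) (k - 1)
  rw [Nat.sub_add_cancel hp.one_le, Nat.sub_add_cancel hk0] at hrec
  calc (k * p.choose k : ℤ) = p * (p - 1).choose (k - 1) := by
        rw [mul_comm]; exact_mod_cast hrec.symm
    _ ≡ p * (-1) ^ (k - 1) [ZMOD p ^ 2] := by rw [sq]; exact hmod.mul_left'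

lemma Nat.Prime.exists_sum_choose_mul_pow_div_eq {p : ℕ} (hp : p.Prime) (x : ℤ) :
    ∃ z : ℚ, z.den.Coprime p ∧
      ∑ k ∈ Icc 1 (p - 1), (p.choose k : ℚ) * x ^ k / k
        = p * ∑ k ∈ Icc 1 (p - 1), (-1) ^ (k - 1) * (x : ℚ) ^ k / k ^ 2 + p ^ 2 * z := by
  have h : ∀ k ∈ Icc 1 (p - 1),
      ∃ a : ℤ, (k * p.choose k : ℤ) = p * (-1) ^ (k - 1) + p ^ 2 * a := by
    intro k hk
    rw [mem_Icc] at hk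
    obtain ⟨a, ha⟩ := (hp.mul_choose_modEq hk.1 (by omega)).symm.dvd
    exact ⟨a, by linear_combination ha⟩
  choose! a ha using h
  refine ⟨∑ k ∈ Icc 1 (p - 1), ((a k * x ^ k : ℤ) : ℚ) / (k ^ 2 : ℕ), ?_, ?_⟩
  · refine Rat.coprime_den_sum _ _ fun k hk => Rat.coprime_den_intCast_div_natCast _ ?_
    rw [mem_Icc] at hk
    exact .pow_left 2 ((hp.coprime_iff_not_dvd.mpr (Nat.not_dvd_of_pos_of_lt hk.1 (by omega))).symm)
  · rw [mul_sum, mul_sum, ← sum_add_distrib]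
    refine sum_congr rfl fun k hk => ?_
    have hk0 : (k : ℚ) ≠ 0 := by have := (mem_Icc.mp hk).1; positivity
    have hak : (k * p.choose k : ℚ) = p * (-1) ^ (k - 1) + p ^ 2 * a k := by
      exact_mod_cast ha k hk
    calc (p.choose k : ℚ) * x ^ k / k = (k * p.choose k) * x ^ k / k ^ 2 := by field_simp
      _ = _ := by rw [hak]; push_cast; ring

theorem fermat_quotient_mod_p_squared' (p : ℕ) (hp : p.Prime) (hodd : Odd p) :
    ratModEq (p ^ 2) ((2 ^ (p - 1) - 1 : ℚ) / p)
      ((∑ r ∈ (Finset.Icc 1 (p - 1)).filter (fun r => Odd r), (1 : ℚ) / r) -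
        p * ∑ r ∈ Finset.Icc 1 (p - 1), (2 : ℚ) ^ (r - 1) / (r : ℚ) ^ 2) := by
  obtain ⟨z, hz, hcongr⟩ := hp.exists_sum_choose_mul_pow_div_eq (-2)
  have hid := sum_Icc_choose_mul_neg_two_pow_div (K := ℚ) hodd
  have hsign : ∑ k ∈ Icc 1 (p - 1), (-1) ^ (k - 1) * ((-2 : ℤ) : ℚ) ^ k / k ^ 2
      = -2 * ∑ r ∈ Icc 1 (p - 1), (2 : ℚ) ^ (r - 1) / (r : ℚ) ^ 2 := by
    rw [mul_sum]
    refine sum_congr rfl fun k hk => ?_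
    obtain ⟨j, rfl⟩ := Nat.exists_eq_add_of_le' (mem_Icc.mp hk).1
    have h : (-1 : ℚ) ^ j * (-2) ^ j = 2 ^ j := by rw [← mul_pow]; norm_num
    push_cast
    linear_combination (-2 / ((j : ℚ) + 1) ^ 2) * h
  have hz2 : (z / 2).den.Coprime p := by
    rw [div_eq_mul_inv]
    exact Rat.coprime_den_mul hz (by simpa using Nat.coprime_two_left.mpr hodd)
  refine ratModEq_of_sub_eq_mul (hz2.pow_right 2) ?_
  rw [hsign] at hcongr
  push_cast at hcongr ⊢
  linear_combination (hcongr - hid) / 2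
end

section
/- Let n and j be positive integers with 1 ≤ j ≤ n. Then ∑_{l=0}^{j-1} (-1)^(j-l-1) · binomial(n-l-1, n-j) · binomial(n, l) · 1/(n-l)^3 = (H_n − H_{n-j})^3 / 6 + (H_n − H_{n-j})(H_n^{(2)} − H_{n-j}^{(2)}) / 2 + (H_n^{(3)} − H_{n-j}^{(3)}) / 3. -/
/-!
Write `S_r(j)` for the sum with `1 / (n - l) ^ r` in place of `1 / (n - l) ^ 3`. It is the
complete homogeneous symmetric polynomial `h_r` in `1/(n-j+1), …, 1/n`: Pascal's rule and
`(n - l) * C(n-l-1, n-j-1) = (n - j) * C(n-l, n-j)` give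
`S_{r+1}(j+1) = S_{r+1}(j) + S_r(j+1) / (n - j)`, the recurrence of `h_r` when the variable
`1/(n-j)` is added, and `S_0(j) = 1` for `j ≥ 1` because
`C(n-l, n-j) * C(n, l) = C(n, j) * C(j, l)` turns `S_0(j+1) - S_0(j)` into
`C(n, j) * (1 - 1) ^ j`. The right-hand side is Newton's expression of `h_3` through the power
sums `H_n^{(r)} - H_{n-j}^{(r)}`, and it satisfies the same recurrence.
-/

/-- `harmonic' r k` is the `k`-th harmonic number of order `r`, i.e. `∑_{i=1}^k 1/i^r`. -/
def harmonic' (r k : ℕ) : ℚ := ∑ i ∈ Finset.Icc 1 k, 1 / (i : ℚ) ^ r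

open Finset

lemma Nat.choose_sub_mul_choose {n j l : ℕ} (hl : l ≤ j) (hj : j ≤ n) :
    (n - l).choose (n - j) * n.choose l = n.choose j * j.choose l := by
  rw [Nat.choose_mul hl, mul_comm,
    Nat.choose_symm_of_eq_add (show n - l = n - j + (j - l) by omega)]

def alternatingCoeff (n j l : ℕ) : ℚ :=
  (-1) ^ (j - l - 1) * ((n - l - 1).choose (n - j) : ℚ) * (n.choose l : ℚ)

def invPowSum (n r j : ℕ) : ℚ :=
  ∑ l ∈ range j, alternatingCoeff n j l * (1 / ((n - l : ℕ) : ℚ) ^ r)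

lemma alternatingCoeff_self {n j : ℕ} (hj : j < n) : alternatingCoeff n j j = 0 := by
  simp [alternatingCoeff, Nat.choose_eq_zero_of_lt (show n - j - 1 < n - j by omega)]

lemma alternatingCoeff_succ_sub {n j l : ℕ} (hl : l ≤ j) (hj : j < n) :
    alternatingCoeff n (j + 1) l - alternatingCoeff n j l =
      (-1) ^ (j - l) * ((n - l).choose (n - j) : ℚ) * (n.choose l : ℚ) := by
  obtain ⟨m, hm⟩ : ∃ m, n - j = m + 1 := ⟨n - j - 1, by omega⟩
  obtain ⟨k, hk⟩ : ∃ k, j - l = k := ⟨_, rfl⟩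
  have h₁ : n - (j + 1) = m := by omega
  have h₂ : j + 1 - l - 1 = k := by omega
  have h₃ : n - l = m + k + 1 := by omega
  simp only [alternatingCoeff, h₁, h₂, h₃, hm, hk]
  cases k with
  | zero => simp [Nat.choose_succ_self]
  | succ k =>
    rw [Nat.choose_succ_succ' (m + (k + 1)), Nat.add_sub_cancel, pow_succ]
    push_cast
    ring

lemma invPowSum_succ_sub {n j : ℕ} (r : ℕ) (hj : j < n) :
    invPowSum n r (j + 1) - invPowSum n r j =
      ∑ l ∈ range (j + 1),
        (-1) ^ (j - l) * ((n - l).choose (n - j) : ℚ) * (n.choose l : ℚ) *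
          (1 / ((n - l : ℕ) : ℚ) ^ r) := by
  have hj' : invPowSum n r j =
      ∑ l ∈ range (j + 1), alternatingCoeff n j l * (1 / ((n - l : ℕ) : ℚ) ^ r) := by
    rw [sum_range_succ, alternatingCoeff_self hj, zero_mul, add_zero, invPowSum]
  rw [invPowSum, hj', ← sum_sub_distrib]
  refine sum_congr rfl fun l hl => ?_
  rw [← sub_mul, alternatingCoeff_succ_sub (Nat.lt_succ_iff.mp (mem_range.mp hl)) hj]

lemma invPowSum_zero {n j : ℕ} (hj : 1 ≤ j) (hjn : j ≤ n) : invPowSum n 0 j = 1 := by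
  induction j, hj using Nat.le_induction with
  | base => simp [invPowSum, alternatingCoeff]
  | succ j hj ih =>
    have hjn' : j < n := hjn
    have hstep : invPowSum n 0 (j + 1) - invPowSum n 0 j = 0 :=
      calc invPowSum n 0 (j + 1) - invPowSum n 0 j
          = (n.choose j : ℚ) *
              ∑ l ∈ range (j + 1), 1 ^ l * (-1) ^ (j - l) * (j.choose l : ℚ) := by
            rw [invPowSum_succ_sub 0 hjn', mul_sum]
            refine sum_congr rfl fun l hl => ?_
            have hchoose :
                ((n - l).choose (n - j) : ℚ) * n.choose l = n.choose j * j.choose l := by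
              exact_mod_cast
                Nat.choose_sub_mul_choose (Nat.lt_succ_iff.mp (mem_range.mp hl)) hjn'.le
            linear_combination (-1 : ℚ) ^ (j - l) * hchoose
        _ = (n.choose j : ℚ) * (1 + (-1)) ^ j := by rw [add_pow]
        _ = 0 := by simp [zero_pow (show j ≠ 0 by omega)]
    linarith [ih hjn'.le]

lemma invPowSum_succ_succ {n j : ℕ} (r : ℕ) (hj : j < n) :
    invPowSum n (r + 1) (j + 1) =
      invPowSum n (r + 1) j + invPowSum n r (j + 1) / ((n - j : ℕ) : ℚ) := by
  rw [← sub_eq_iff_eq_add', invPowSum_succ_sub (r + 1) hj, invPowSum, sum_div]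
  refine sum_congr rfl fun l hmem => ?_
  have hl : l < n := (Nat.lt_succ_iff.mp (mem_range.mp hmem)).trans_lt hj
  obtain ⟨a, ha⟩ : ∃ a, n - j = a + 1 := ⟨n - j - 1, by omega⟩
  obtain ⟨b, hb⟩ : ∃ b, n - l = b + 1 := ⟨n - l - 1, by omega⟩
  have hsign : j + 1 - l - 1 = j - l := by omega
  have hb' : n - l - 1 = b := by omega
  have ha' : n - (j + 1) = a := by omega
  have hx : ((b + 1 : ℕ) : ℚ) ≠ 0 := by positivity
  have hy : ((a + 1 : ℕ) : ℚ) ≠ 0 := by positivity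
  have hkey : (b.choose a : ℚ) =
      ((b + 1).choose (a + 1) : ℚ) * ((a + 1 : ℕ) : ℚ) / ((b + 1 : ℕ) : ℚ) := by
    rw [eq_div_iff hx, mul_comm]
    exact_mod_cast Nat.add_one_mul_choose_eq b a
  rw [alternatingCoeff, hsign, hb', ha', ha, hb, hkey, pow_succ]
  field_simp

lemma harmonic'_succ (r k : ℕ) :
    harmonic' r (k + 1) = harmonic' r k + 1 / ((k + 1 : ℕ) : ℚ) ^ r :=
  sum_Icc_succ_top (by omega) _

lemma harmonic'_sub_succ {n j : ℕ} (r : ℕ) (hj : j < n) :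
    harmonic' r (n - j) = harmonic' r (n - (j + 1)) + 1 / ((n - j : ℕ) : ℚ) ^ r := by
  rw [show n - j = n - (j + 1) + 1 by omega, harmonic'_succ]

lemma invPowSum_one {n j : ℕ} (hjn : j ≤ n) :
    invPowSum n 1 j = harmonic' 1 n - harmonic' 1 (n - j) := by
  induction j with
  | zero => simp [invPowSum]
  | succ j ih =>
    have hjn' : j < n := hjn
    rw [invPowSum_succ_succ 0 hjn', invPowSum_zero (by omega) hjn, ih hjn'.le,
      harmonic'_sub_succ 1 hjn']
    ring

lemma invPowSum_two {n j : ℕ} (hjn : j ≤ n) :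
    invPowSum n 2 j =
      ((harmonic' 1 n - harmonic' 1 (n - j)) ^ 2 + (harmonic' 2 n - harmonic' 2 (n - j))) / 2 := by
  induction j with
  | zero => simp [invPowSum]
  | succ j ih =>
    have hjn' : j < n := hjn
    rw [invPowSum_succ_succ 1 hjn', invPowSum_one hjn, ih hjn'.le,
      harmonic'_sub_succ 1 hjn', harmonic'_sub_succ 2 hjn']
    ring

lemma invPowSum_three {n j : ℕ} (hjn : j ≤ n) :
    invPowSum n 3 j =
      (harmonic' 1 n - harmonic' 1 (n - j)) ^ 3 / 6 +
        (harmonic' 1 n - harmonic' 1 (n - j)) * (harmonic' 2 n - harmonic' 2 (n - j)) / 2 +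
        (harmonic' 3 n - harmonic' 3 (n - j)) / 3 := by
  induction j with
  | zero => simp [invPowSum]
  | succ j ih =>
    have hjn' : j < n := hjn
    rw [invPowSum_succ_succ 2 hjn', invPowSum_two hjn, ih hjn'.le,
      harmonic'_sub_succ 1 hjn', harmonic'_sub_succ 2 hjn', harmonic'_sub_succ 3 hjn']
    ring

theorem binomial_sum_inverse_cube_general (n j : ℕ) (hjn : j ≤ n) :
    ∑ l ∈ Finset.range j,
        (-1 : ℚ) ^ (j - l - 1) * ((n - l - 1).choose (n - j) : ℚ) * (n.choose l : ℚ) *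
          (1 / ((n - l : ℕ) : ℚ) ^ 3) =
      (harmonic' 1 n - harmonic' 1 (n - j)) ^ 3 / 6 +
        (harmonic' 1 n - harmonic' 1 (n - j)) * (harmonic' 2 n - harmonic' 2 (n - j)) / 2 +
        (harmonic' 3 n - harmonic' 3 (n - j)) / 3 :=
  invPowSum_three hjn

theorem binomial_sum_inverse_cube (n j : ℕ) (hj : 1 ≤ j) (hjn : j ≤ n) :
    ∑ l ∈ Finset.range j,
        (-1 : ℚ) ^ (j - l - 1) * ((n - l - 1).choose (n - j) : ℚ) * (n.choose l : ℚ) *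
          (1 / ((n - l : ℕ) : ℚ) ^ 3) =
      (harmonic' 1 n - harmonic' 1 (n - j)) ^ 3 / 6 +
        (harmonic' 1 n - harmonic' 1 (n - j)) * (harmonic' 2 n - harmonic' 2 (n - j)) / 2 +
        (harmonic' 3 n - harmonic' 3 (n - j)) / 3 :=
  binomial_sum_inverse_cube_general n j hjn
end
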